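/- Let K be a number field and γ an algebraic number. Then X(K,γ) = ∅ if and only if O_K[γ] ∩ K = O_K. -/

import Mathlib

open IntermediateField NumberField IsDedekindDomain

noncomputable section

local notation "Qbar" => AlgebraicClosure ℚ

instance numberField_of_fd (K : IntermediateField ℚ Qbar) [FiniteDimensional ℚ K] :
    NumberField K := ⟨⟩

/-- `K(γ)` as an intermediate field of `Qbar/ℚ`. -/
def adjF (K : IntermediateField ℚ Qbar) (γ : Qbar) : IntermediateField ℚ Qbar :=
  K ⊔ IntermediateField.adjoin ℚ {γ}

instance adjF_fd (K : IntermediateField ℚ Qbar) (γ : Qbar) [FiniteDimensional ℚ K] :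
    FiniteDimensional ℚ (adjF K γ) := by
  have h1 : FiniteDimensional ℚ (IntermediateField.adjoin ℚ ({γ} : Set Qbar)) := by
    apply IntermediateField.finiteDimensional_adjoin
    intro x _
    exact (IsAlgebraic.isIntegral ((AlgebraicClosure.isAlgebraic ℚ).isAlgebraic x))
  exact IntermediateField.finiteDimensional_sup K _

theorem mem_adjF (K : IntermediateField ℚ Qbar) (γ : Qbar) : γ ∈ adjF K γ :=
  le_sup_right (a := K) (IntermediateField.subset_adjoin ℚ {γ} rfl)

/-- γ as an element of K(γ). -/
def adjElt (K : IntermediateField ℚ Qbar) (γ : Qbar) : adjF K γ := ⟨γ, mem_adjF K γ⟩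

/-- the set X(K,γ) -/
def XSet (K : IntermediateField ℚ Qbar) [FiniteDimensional ℚ K] (γ : Qbar) :
    Set (HeightOneSpectrum (𝓞 K)) :=
  {p | ∀ q : HeightOneSpectrum (𝓞 (adjF K γ)),
    q.asIdeal.comap (RingOfIntegers.mapRingHom (IntermediateField.inclusion (le_sup_left : K ≤ adjF K γ) : K →ₐ[ℚ] adjF K γ))
      = p.asIdeal → 1 < q.valuation (adjF K γ) (adjElt K γ)}

/-- the set Y(K,γ) -/
def YSet (K : IntermediateField ℚ Qbar) [FiniteDimensional ℚ K] (γ : Qbar) :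
    Set (HeightOneSpectrum (𝓞 K)) :=
  {p | ∃ q : HeightOneSpectrum (𝓞 (adjF K γ)),
    q.asIdeal.comap (RingOfIntegers.mapRingHom (IntermediateField.inclusion (le_sup_left : K ≤ adjF K γ) : K →ₐ[ℚ] adjF K γ))
      = p.asIdeal ∧ 1 < q.valuation (adjF K γ) (adjElt K γ)}

/-- the image of `𝓞 K` in `Qbar`. -/
def OKset (K : IntermediateField ℚ Qbar) : Set Qbar :=
  Set.range (fun a : 𝓞 K => algebraMap K Qbar (algebraMap (𝓞 K) K a))

/-- the subring `O_K[γ]` of `Qbar`. -/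
def OKadj (K : IntermediateField ℚ Qbar) (γ : Qbar) : Subring Qbar :=
  Subring.closure (OKset K ∪ {γ})


open IsDedekindDomain IsDedekindDomain.HeightOneSpectrum
open scoped Multiplicative WithZero

section General

variable {R : Type*} [CommRing R] [IsDedekindDomain R] {K : Type*} [Field K]
  [Algebra R K] [IsFractionRing R K]

lemma zm0_le_neg_one {x : ℤᵐ⁰} (hx : x < 1) :
    x ≤ (Multiplicative.ofAdd (-1 : ℤ) : Multiplicative ℤ) := by
  rcases eq_or_ne x 0 with rfl | h0
  · exact zero_le'
  lift x to Multiplicative ℤ using h0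
  rw [← WithZero.coe_one, WithZero.coe_lt_coe] at hx
  rw [WithZero.coe_le_coe]
  have : Multiplicative.toAdd x < 0 := hx
  have h2 : Multiplicative.toAdd x ≤ -1 := by omega
  exact h2

lemma intVal_eq_one_of_not_mem (v : HeightOneSpectrum R) {s : R} (hs : s ∉ v.asIdeal) :
    v.intValuation s = 1 := by
  refine le_antisymm (v.intValuation_le_one s) ?_
  rw [intValuation_apply]
  by_contra h
  have hlt : v.intValuation s < 1 := lt_of_not_ge h
  rw [v.intValuation_lt_one_iff_dvd, Ideal.dvd_span_singleton] at hlt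
  exact hs hlt

lemma intVal_lt_one_of_mem (v : HeightOneSpectrum R) {s : R} (hs : s ∈ v.asIdeal) :
    v.intValuation s < 1 := by
  rw [v.intValuation_lt_one_iff_dvd, Ideal.dvd_span_singleton]
  exact hs

lemma keyLocal (v : HeightOneSpectrum R) (x : K) (hx : v.valuation K x ≤ 1) :
    ∃ a s : R, s ∉ v.asIdeal ∧ algebraMap R K s * x = algebraMap R K a := by
  rcases eq_or_ne x 0 with rfl | hx0
  · exact ⟨0, 1, fun h => v.isPrime.ne_top (v.asIdeal.eq_top_of_isUnit_mem h isUnit_one),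
      by simp⟩
  obtain ⟨α, β, hβ, hxab⟩ := IsFractionRing.div_surjective (A := R) x
  have hβ0 : β ≠ 0 := nonZeroDivisors.ne_zero hβ
  have hβK : algebraMap R K β ≠ 0 := by
    simpa using fun h => hβ0 (IsFractionRing.injective R K (by simpa using h))
  have hxeq : algebraMap R K α = x * algebraMap R K β := by
    rw [← hxab, div_mul_cancel₀ _ hβK]
  have hval : v.intValuation α ≤ v.intValuation β := by
    have h1 : v.valuation K (algebraMap R K α) =
        v.valuation K x * v.valuation K (algebraMap R K β) := by
      rw [hxeq, Valuation.map_mul]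
    rw [valuation_of_algebraMap, valuation_of_algebraMap] at h1
    calc v.intValuation α = v.valuation K x * v.intValuation β := h1
    _ ≤ 1 * v.intValuation β := by
        exact mul_le_mul_left hx _
    _ = v.intValuation β := one_mul _
  have hα0 : α ≠ 0 := by
    intro h
    apply hx0
    rw [h, map_zero] at hxeq
    have := hxeq.symm
    exact (mul_eq_zero.mp this).resolve_right hβK
  -- get n with q^n ∣ span β, ¬ q^(n+1) ∣ span β
  have hspanβ : Ideal.span {β} ≠ (0 : Ideal R) := by
    rw [Ne, Ideal.zero_eq_bot, Ideal.span_singleton_eq_bot]; exact hβ0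
  have hfin : FiniteMultiplicity v.asIdeal (Ideal.span {β}) :=
    FiniteMultiplicity.of_prime_left v.prime hspanβ
  classical
  set n := Nat.find hfin with hn
  have hnotdvd : ¬ v.asIdeal ^ (n + 1) ∣ Ideal.span {β} := Nat.find_spec hfin
  have hdvd : v.asIdeal ^ n ∣ Ideal.span {β} := by
    rcases Nat.eq_zero_or_pos n with h0 | hpos
    · rw [h0, pow_zero]; exact one_dvd _
    · have := Nat.find_min hfin (m := n - 1) (by omega)
      push_neg at this
      simpa [Nat.sub_add_cancel hpos] using this
  -- intValuation β ≤ ofAdd (-n)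
  have hβval : v.intValuation β ≤ ((Multiplicative.ofAdd (-(n : ℤ)) : Multiplicative ℤ) : ℤᵐ⁰) := by
    exact (v.intValuation_le_pow_iff_dvd _ _).mpr hdvd
  have hαdvd : v.asIdeal ^ n ∣ Ideal.span {α} := by
    exact (v.intValuation_le_pow_iff_dvd _ _).mp (le_trans hval hβval)
  obtain ⟨C, hC⟩ := hdvd
  have hCq : ¬ C ≤ v.asIdeal := by
    intro hle
    apply hnotdvd
    obtain ⟨C', hC'⟩ := (Ideal.dvd_iff_le).mpr hle
    rw [hC, hC', pow_succ]
    exact ⟨C', by ring⟩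
  obtain ⟨s, hsC, hs⟩ := SetLike.not_le_iff_exists.mp hCq
  have hdvd2 : Ideal.span {β} ∣ Ideal.span {α * s} := by
    rw [← Ideal.span_singleton_mul_span_singleton, hC]
    exact mul_dvd_mul hαdvd (Ideal.dvd_iff_le.mpr ((Ideal.span_singleton_le_iff_mem C).mpr hsC))
  have hdvd3 : β ∣ α * s := by
    rw [← Ideal.span_singleton_le_span_singleton]
    exact Ideal.le_of_dvd hdvd2
  obtain ⟨a, ha⟩ := hdvd3
  refine ⟨a, s, hs, ?_⟩
  have : algebraMap R K α * algebraMap R K s = algebraMap R K β * algebraMap R K a := by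
    rw [← map_mul, ← map_mul, ha]
  have hx' : x = algebraMap R K α / algebraMap R K β := hxab.symm
  rw [hx']
  field_simp
  calc algebraMap R K s * algebraMap R K α = algebraMap R K α * algebraMap R K s := by ring
  _ = algebraMap R K β * algebraMap R K a := this
  _ = algebraMap R K β * algebraMap R K a := by ring


lemma mem_range_algebraMap_of_forall_valuation_le_one (x : K)
    (h : ∀ v : HeightOneSpectrum R, v.valuation K x ≤ 1) :
    ∃ r : R, algebraMap R K r = x := by
  have hmem : x ∈ (⨅ v : HeightOneSpectrum R,
      Localization.subalgebra.ofField K _ v.asIdeal.primeCompl_le_nonZeroDivisors) := by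
    rw [Algebra.mem_iInf]
    intro v
    obtain ⟨a, s, hs, heq⟩ := keyLocal v x (h v)
    have hsK : algebraMap R K s ≠ 0 := by
      intro h0
      have : s = 0 := IsFractionRing.injective R K (by simpa using h0)
      exact hs (this ▸ v.asIdeal.zero_mem)
    refine ⟨a, s, hs, ?_⟩
    field_simp
    rw [mul_comm] at heq
    exact heq.symm ▸ rfl
  rw [HeightOneSpectrum.iInf_localization_eq_bot, Algebra.mem_bot] at hmem
  exact hmem

lemma exists_pow_not_dvd_ideal {I : Ideal R} (hI : I ≠ 0) :
    ∃ N : ℕ, 0 < N ∧ ∀ v : HeightOneSpectrum R, ¬ (v.asIdeal ^ N ∣ I) := by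
  classical
  have hfin : {v : HeightOneSpectrum R | v.asIdeal ∣ I}.Finite := Ideal.finite_factors hI
  set T := hfin.toFinset with hT
  set N := (T.sup fun v => Nat.find (FiniteMultiplicity.of_prime_left v.prime hI)) + 2 with hN
  refine ⟨N, by omega, fun v hv => ?_⟩
  have hvI : v.asIdeal ∣ I := dvd_trans (dvd_pow_self _ (by omega : N ≠ 0)) hv
  have hvT : v ∈ T := by rw [hT, Set.Finite.mem_toFinset]; exact hvI
  have hfind := Nat.find_spec (FiniteMultiplicity.of_prime_left v.prime hI)
  apply hfind
  refine dvd_trans (pow_dvd_pow _ ?_) hv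
  have hle : Nat.find (FiniteMultiplicity.of_prime_left v.prime hI) ≤
      T.sup fun v => Nat.find (FiniteMultiplicity.of_prime_left v.prime hI) :=
    Finset.le_sup (f := fun v => Nat.find (FiniteMultiplicity.of_prime_left v.prime hI)) hvT
  omega


lemma one_lt_inv_inv₀ {G₀ : Type*} [LinearOrderedCommGroupWithZero G₀] {a : G₀}
    (ha : a ≠ 0) (h : a⁻¹ < 1) : 1 < a := by
  have := inv_lt_one₀ (zero_lt_iff.mpr ha)
  exact this.mp h


lemma zm0_inv_antitone {a b : ℤᵐ⁰} (ha : a ≠ 0) (h : a ≤ b) : b⁻¹ ≤ a⁻¹ := by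
  have hb : b ≠ 0 := fun h0 => ha (le_antisymm (h0 ▸ h) zero_le')
  lift a to Multiplicative ℤ using ha
  lift b to Multiplicative ℤ using hb
  rw [← WithZero.coe_inv, ← WithZero.coe_inv, WithZero.coe_le_coe]
  rw [WithZero.coe_le_coe] at h
  exact inv_le_inv_iff.mpr h

end General

section Main

set_option linter.unusedSectionVars false
set_option maxHeartbeats 1000000
set_option synthInstance.maxHeartbeats 200000

variable (K : IntermediateField ℚ Qbar) [FiniteDimensional ℚ K] (γ : Qbar)

lemma le_adjF : K ≤ adjF K γ := le_sup_left

/-- The inclusion as an algebra hom with fixed target type. -/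
noncomputable def inclKF : K →ₐ[ℚ] adjF K γ := IntermediateField.inclusion (le_adjF K γ)

/-- The ring hom between the rings of integers. -/
noncomputable abbrev phima : 𝓞 K →+* 𝓞 (adjF K γ) :=
  RingOfIntegers.mapRingHom (inclKF K γ)

lemma phima_coe (a : 𝓞 K) :
    (algebraMap (𝓞 (adjF K γ)) (adjF K γ) (phima K γ a)) =
      inclKF K γ (algebraMap (𝓞 K) K a) := rfl

lemma phima_inj : Function.Injective (phima K γ) := by
  intro a b h
  have h2 : (algebraMap (𝓞 (adjF K γ)) (adjF K γ) (phima K γ a)) =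
      (algebraMap (𝓞 (adjF K γ)) (adjF K γ) (phima K γ b)) := by rw [h]
  rw [phima_coe, phima_coe] at h2
  have h3 := (IntermediateField.inclusion_injective _) h2
  exact NumberField.RingOfIntegers.ext h3

lemma avoid (p : HeightOneSpectrum (𝓞 K)) (A : Ideal (𝓞 (adjF K γ)))
    (h : ∀ q : HeightOneSpectrum (𝓞 (adjF K γ)),
      q.asIdeal.comap (phima K γ) = p.asIdeal → ¬ A ≤ q.asIdeal) :
    ∃ r : 𝓞 K, r ∉ p.asIdeal ∧ phima K γ r ∈ A := by
  by_contra hcon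
  push_neg at hcon
  have hle : A.comap (phima K γ) ≤ p.asIdeal := by
    intro r hr
    by_contra hrp
    exact hcon r hrp hr
  letI : Algebra (𝓞 K) (𝓞 (adjF K γ)) := (phima K γ).toAlgebra
  haveI : IsScalarTower ℤ (𝓞 K) (𝓞 (adjF K γ)) :=
    IsScalarTower.of_algebraMap_eq' (Subsingleton.elim _ _)
  haveI : Algebra.IsIntegral (𝓞 K) (𝓞 (adjF K γ)) := ⟨fun x =>
    IsIntegral.tower_top (IsIntegralClosure.isIntegral ℤ (adjF K γ) x)⟩
  have halg : algebraMap (𝓞 K) (𝓞 (adjF K γ)) = phima K γ := rfl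
  obtain ⟨Q, hQA, hQp, hQc⟩ :=
    Ideal.exists_ideal_over_prime_of_isIntegral p.asIdeal A (by rwa [halg])
  have hQb : Q ≠ ⊥ := by
    rintro rfl
    apply p.ne_bot
    rw [← hQc, halg, ← Ideal.comap_bot_of_injective (phima K γ) (phima_inj K γ)]
  exact h ⟨Q, hQp, hQb⟩ (by rw [← halg]; exact hQc) hQA

lemma exists_over (p : HeightOneSpectrum (𝓞 K)) :
    ∃ q : HeightOneSpectrum (𝓞 (adjF K γ)),
      q.asIdeal.comap (phima K γ) = p.asIdeal := by
  by_contra h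
  push_neg at h
  obtain ⟨r, hrp, hrA⟩ := avoid K γ p ⊥ (fun q hq => absurd hq (h q))
  have : phima K γ r = phima K γ 0 := by simpa using hrA
  exact hrp ((phima_inj K γ this) ▸ p.asIdeal.zero_mem)

lemma val_le_one_down {p : HeightOneSpectrum (𝓞 K)}
    {q : HeightOneSpectrum (𝓞 (adjF K γ))}
    (hpq : q.asIdeal.comap (phima K γ) = p.asIdeal) {x : K}
    (hx : p.valuation K x ≤ 1) :
    q.valuation (adjF K γ) (inclKF K γ x) ≤ 1 := by
  obtain ⟨a, s, hs, heq⟩ := keyLocal p x hx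
  have hsq : phima K γ s ∉ q.asIdeal := by
    intro hmem
    exact hs (by rw [← hpq]; exact hmem)
  have heqF : algebraMap (𝓞 (adjF K γ)) (adjF K γ) (phima K γ s) *
      inclKF K γ x =
      algebraMap (𝓞 (adjF K γ)) (adjF K γ) (phima K γ a) := by
    rw [phima_coe, phima_coe, ← map_mul, heq]
  have hv := congrArg (q.valuation (adjF K γ)) heqF
  rw [Valuation.map_mul, valuation_of_algebraMap, valuation_of_algebraMap,
    intVal_eq_one_of_not_mem q hsq, one_mul] at hv
  rw [hv]
  exact q.intValuation_le_one _

lemma val_lt_one_down {p : HeightOneSpectrum (𝓞 K)}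
    {q : HeightOneSpectrum (𝓞 (adjF K γ))}
    (hpq : q.asIdeal.comap (phima K γ) = p.asIdeal) {x : K}
    (hx : p.valuation K x < 1) :
    q.valuation (adjF K γ) (inclKF K γ x) < 1 := by
  obtain ⟨a, s, hs, heq⟩ := keyLocal p x hx.le
  have hsq : phima K γ s ∉ q.asIdeal := by
    intro hmem
    exact hs (by rw [← hpq]; exact hmem)
  have hsp1 : p.intValuation s = 1 := intVal_eq_one_of_not_mem p hs
  have hva : p.intValuation a < 1 := by
    have hv := congrArg (p.valuation K) heq
    rw [Valuation.map_mul, valuation_of_algebraMap, valuation_of_algebraMap, hsp1,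
      one_mul] at hv
    rw [← hv]
    exact hx
  have haq : phima K γ a ∈ q.asIdeal := by
    rw [← Ideal.mem_comap, hpq]
    by_contra hne
    rw [intVal_eq_one_of_not_mem p hne] at hva
    exact (lt_irrefl _ hva)
  have heqF : algebraMap (𝓞 (adjF K γ)) (adjF K γ) (phima K γ s) *
      inclKF K γ x =
      algebraMap (𝓞 (adjF K γ)) (adjF K γ) (phima K γ a) := by
    rw [phima_coe, phima_coe, ← map_mul, heq]
  have hv := congrArg (q.valuation (adjF K γ)) heqF
  rw [Valuation.map_mul, valuation_of_algebraMap, valuation_of_algebraMap,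
    intVal_eq_one_of_not_mem q hsq, one_mul] at hv
  rw [hv]
  exact intVal_lt_one_of_mem q haq

lemma val_le_one_up {p : HeightOneSpectrum (𝓞 K)}
    {q : HeightOneSpectrum (𝓞 (adjF K γ))}
    (hpq : q.asIdeal.comap (phima K γ) = p.asIdeal) {x : K}
    (hx : q.valuation (adjF K γ) (inclKF K γ x) ≤ 1) :
    p.valuation K x ≤ 1 := by
  by_contra hgt
  rw [not_le] at hgt
  have hx0 : x ≠ 0 := by
    rintro rfl
    rw [map_zero] at hgt
    exact (lt_irrefl _ (hgt.trans zero_lt_one)).elim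
  have hinv : p.valuation K x⁻¹ < 1 := by
    rw [map_inv₀]
    exact inv_lt_one_of_one_lt₀ hgt
  have := val_lt_one_down K γ hpq hinv
  rw [map_inv₀, map_inv₀] at this
  have hvx : (1 : ℤᵐ⁰) < q.valuation (adjF K γ) (inclKF K γ x) := by
    have hne : q.valuation (adjF K γ) (inclKF K γ x) ≠ 0 := by
      rw [Valuation.ne_zero_iff]
      simpa using hx0
    exact one_lt_inv_inv₀ hne this
  exact absurd hx (not_le.mpr hvx)


lemma inclKF_coe (x : K) :
    algebraMap (adjF K γ) Qbar (inclKF K γ x) = algebraMap K Qbar x := rfl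

lemma adjElt_coe : algebraMap (adjF K γ) Qbar (adjElt K γ) = γ := rfl

lemma mem_OKadj_of_OK (a : 𝓞 K) :
    algebraMap K Qbar (algebraMap (𝓞 K) K a) ∈ OKadj K γ :=
  Subring.subset_closure (Set.mem_union_left _ ⟨a, rfl⟩)

lemma gamma_mem_OKadj : γ ∈ OKadj K γ :=
  Subring.subset_closure (Set.mem_union_right _ (Set.mem_singleton γ))

lemma exists_mul_mem (ξ : Qbar) (hξ : ξ ∈ adjF K γ) :
    ∃ d : 𝓞 K, d ≠ 0 ∧
      algebraMap K Qbar (algebraMap (𝓞 K) K d) * ξ ∈ OKadj K γ := by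
  classical
  have hγalg : IsIntegral K γ :=
    (((AlgebraicClosure.isAlgebraic ℚ).isAlgebraic γ).isIntegral.tower_top)
  have hmem : ξ ∈ IntermediateField.adjoin K ({γ} : Set Qbar) := by
    have hr : IntermediateField.restrictScalars ℚ
        (IntermediateField.adjoin K ({γ} : Set Qbar)) = adjF K γ := by
      exact IntermediateField.restrictScalars_adjoin_eq_sup (K := K) (S := ({γ} : Set Qbar))
    have : ξ ∈ IntermediateField.restrictScalars ℚ
        (IntermediateField.adjoin K ({γ} : Set Qbar)) := by rw [hr]; exact hξ
    exact this
  have hmem2 : ξ ∈ Algebra.adjoin K ({γ} : Set Qbar) := by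
    rw [← IntermediateField.adjoin_simple_toSubalgebra_of_isAlgebraic hγalg.isAlgebraic]
    exact hmem
  rw [Algebra.adjoin_singleton_eq_range_aeval] at hmem2
  obtain ⟨P, hP0⟩ := hmem2
  have hP : Polynomial.aeval γ P = ξ := hP0
  obtain ⟨b, hb⟩ := IsLocalization.exist_integer_multiples (nonZeroDivisors (𝓞 K))
    (Finset.range (P.natDegree + 1)) (fun i => P.coeff i)
  refine ⟨(b : 𝓞 K), nonZeroDivisors.ne_zero b.2, ?_⟩
  have hPsum : ξ = ∑ i ∈ Finset.range (P.natDegree + 1),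
      algebraMap K Qbar (P.coeff i) * γ ^ i := by
    rw [← hP, Polynomial.aeval_def, Polynomial.eval₂_eq_sum_range]
  rw [hPsum, Finset.mul_sum]
  apply Subring.sum_mem
  intro i hi
  obtain ⟨r, hr⟩ := hb i hi
  have heq : algebraMap K Qbar (algebraMap (𝓞 K) K (b : 𝓞 K)) *
      (algebraMap K Qbar (P.coeff i) * γ ^ i) =
      algebraMap K Qbar (algebraMap (𝓞 K) K r) * γ ^ i := by
    rw [← mul_assoc, ← map_mul]
    congr 2
    rw [hr]
    simp [Algebra.smul_def]
  rw [heq]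
  exact Subring.mul_mem _ (mem_OKadj_of_OK K γ r)
    (Subring.pow_mem _ (gamma_mem_OKadj K γ) i)

lemma exists_denom : ∃ d : 𝓞 K, d ≠ 0 ∧ ∀ w : 𝓞 (adjF K γ),
    algebraMap K Qbar (algebraMap (𝓞 K) K d) *
      algebraMap (adjF K γ) Qbar (algebraMap (𝓞 (adjF K γ)) (adjF K γ) w) ∈ OKadj K γ := by
  classical
  let b := Module.Free.chooseBasis ℤ (𝓞 (adjF K γ))
  have hch : ∀ i : Module.Free.ChooseBasisIndex ℤ (𝓞 (adjF K γ)), ∃ d : 𝓞 K, d ≠ 0 ∧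
      algebraMap K Qbar (algebraMap (𝓞 K) K d) *
        algebraMap (adjF K γ) Qbar (algebraMap (𝓞 (adjF K γ)) (adjF K γ) (b i)) ∈
          OKadj K γ := fun i =>
    exists_mul_mem K γ _ (SetLike.coe_mem _)
  choose ds hds0 hdsm using hch
  refine ⟨∏ i, ds i, Finset.prod_ne_zero_iff.mpr (fun i _ => hds0 i), fun w => ?_⟩
  have hw : w = ∑ i, b.repr w i • b i := (Module.Basis.sum_repr b w).symm
  have hmain : algebraMap K Qbar (algebraMap (𝓞 K) K (∏ i, ds i)) *
      algebraMap (adjF K γ) Qbar (algebraMap (𝓞 (adjF K γ)) (adjF K γ) w)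
      = ∑ i, b.repr w i • (algebraMap K Qbar (algebraMap (𝓞 K) K (∏ j, ds j)) *
          algebraMap (adjF K γ) Qbar (algebraMap (𝓞 (adjF K γ)) (adjF K γ) (b i))) := by
    conv_lhs => rw [hw]
    rw [map_sum, map_sum, Finset.mul_sum]
    refine Finset.sum_congr rfl (fun i _ => ?_)
    rw [map_zsmul, map_zsmul, mul_smul_comm]
  rw [hmain]
  apply Subring.sum_mem
  intro i _
  apply Subring.zsmul_mem
  have hsplit : (∏ j, ds j) = ds i * ∏ j ∈ Finset.univ.erase i, ds j :=
    (Finset.mul_prod_erase _ _ (Finset.mem_univ i)).symm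
  rw [hsplit, map_mul, map_mul]
  have hcomm : algebraMap K Qbar (algebraMap (𝓞 K) K (ds i)) *
      algebraMap K Qbar (algebraMap (𝓞 K) K (∏ j ∈ Finset.univ.erase i, ds j)) *
      algebraMap (adjF K γ) Qbar (algebraMap (𝓞 (adjF K γ)) (adjF K γ) (b i)) =
      algebraMap K Qbar (algebraMap (𝓞 K) K (∏ j ∈ Finset.univ.erase i, ds j)) *
      (algebraMap K Qbar (algebraMap (𝓞 K) K (ds i)) *
        algebraMap (adjF K γ) Qbar (algebraMap (𝓞 (adjF K γ)) (adjF K γ) (b i))) := by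
    ring
  rw [hcomm]
  exact Subring.mul_mem _ (mem_OKadj_of_OK K γ _) (hdsm i)


lemma dir1 (hX : XSet K γ = ∅) :
    (OKadj K γ : Set Qbar) ∩ (K : Set Qbar) = OKset K := by
  apply Set.Subset.antisymm
  · rintro x ⟨hxO, hxK⟩
    set x' : K := ⟨x, hxK⟩ with hx'
    have hall : ∀ q : HeightOneSpectrum (𝓞 (adjF K γ)),
        q.valuation (adjF K γ) (inclKF K γ x') ≤ 1 := by
      intro q
      letI : Algebra (𝓞 K) (𝓞 (adjF K γ)) := (phima K γ).toAlgebra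
      haveI : IsScalarTower ℤ (𝓞 K) (𝓞 (adjF K γ)) :=
        IsScalarTower.of_algebraMap_eq' (Subsingleton.elim _ _)
      have hpne : q.asIdeal.comap (phima K γ) ≠ ⊥ := by
        obtain ⟨y, hy, hy0⟩ := Submodule.exists_mem_ne_zero_of_ne_bot q.ne_bot
        have hyint : IsIntegral (𝓞 K) y :=
          IsIntegral.tower_top (IsIntegralClosure.isIntegral ℤ (adjF K γ) y)
        exact Ideal.comap_ne_bot_of_integral_mem hy0 hy hyint
      set p : HeightOneSpectrum (𝓞 K) :=
        ⟨q.asIdeal.comap (phima K γ), Ideal.IsPrime.comap _, hpne⟩ with hpdef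
      have hpnotX : p ∉ XSet K γ := by rw [hX]; exact Set.notMem_empty p
      rw [XSet, Set.mem_setOf_eq] at hpnotX
      push_neg at hpnotX
      obtain ⟨q₀, hq₀c, hq₀v⟩ := hpnotX
      have hq₀c' : q₀.asIdeal.comap (phima K γ) = p.asIdeal := hq₀c
      have hx0v : q₀.valuation (adjF K γ) (inclKF K γ x') ≤ 1 := by
        set W : Subring Qbar :=
          Subring.map (algebraMap (adjF K γ) Qbar) ((q₀.valuation (adjF K γ)).integer) with hWdef
        have hsub : (OKadj K γ : Set Qbar) ⊆ (W : Set Qbar) := by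
          apply Subring.closure_le.mpr
          rintro ζ hζ
          rcases hζ with ⟨a, rfl⟩ | hζ
          · refine ⟨algebraMap (𝓞 (adjF K γ)) (adjF K γ) (phima K γ a),
              q₀.valuation_le_one _, ?_⟩
            rw [phima_coe, inclKF_coe]
          · rw [Set.mem_singleton_iff] at hζ
            rw [hζ]
            exact ⟨adjElt K γ, hq₀v, rfl⟩
        obtain ⟨w, hwmem, hwx⟩ := hsub hxO
        have hwx' : w = inclKF K γ x' := by
          apply (algebraMap (adjF K γ) Qbar).injective
          rw [hwx, inclKF_coe]
          rfl
        rw [← hwx']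
        exact hwmem
      have hpx : p.valuation K x' ≤ 1 := val_le_one_up K γ hq₀c' hx0v
      exact val_le_one_down K γ rfl hpx
    obtain ⟨w₀, hw₀⟩ := mem_range_algebraMap_of_forall_valuation_le_one _ hall
    have hint : IsIntegral ℤ x' := by
      haveI : IsScalarTower ℤ K Qbar :=
        IsScalarTower.of_algebraMap_eq' (Subsingleton.elim _ _)
      have h1 : IsIntegral ℤ (algebraMap (𝓞 (adjF K γ)) (adjF K γ) w₀) :=
        NumberField.RingOfIntegers.isIntegral_coe w₀
      rw [hw₀] at h1
      have h2 : IsIntegral ℤ (algebraMap (adjF K γ) Qbar (inclKF K γ x')) :=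
        map_isIntegral_int _ h1
      rw [inclKF_coe] at h2
      exact (isIntegral_algebraMap_iff (algebraMap K Qbar).injective).mp h2
    exact ⟨⟨x', hint⟩, rfl⟩
  · rintro x ⟨a, rfl⟩
    refine ⟨mem_OKadj_of_OK K γ a, ?_⟩
    exact SetLike.coe_mem (algebraMap (𝓞 K) K a)


lemma dir2 (hset : (OKadj K γ : Set Qbar) ∩ (K : Set Qbar) = OKset K) :
    XSet K γ = ∅ := by
  by_contra hne
  obtain ⟨p, hp⟩ := Set.nonempty_iff_ne_empty.mpr hne
  rw [XSet, Set.mem_setOf_eq] at hp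
  have hp' : ∀ q : HeightOneSpectrum (𝓞 (adjF K γ)),
      q.asIdeal.comap (phima K γ) = p.asIdeal → 1 < q.valuation (adjF K γ) (adjElt K γ) := hp
  obtain ⟨q₁, hq₁⟩ := exists_over K γ p
  have hg1 := hp' q₁ hq₁
  have hg0 : adjElt K γ ≠ 0 := by
    rintro h0
    rw [h0, map_zero] at hg1
    simp at hg1
  obtain ⟨t, htp, ht0⟩ := Submodule.exists_mem_ne_zero_of_ne_bot p.ne_bot
  have htS0 : phima K γ t ≠ 0 := fun h => ht0 (phima_inj K γ (by rw [h, map_zero]))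
  have hspan : Ideal.span {phima K γ t} ≠ (0 : Ideal (𝓞 (adjF K γ))) := by
    rw [Ne, Ideal.zero_eq_bot, Ideal.span_singleton_eq_bot]
    exact htS0
  obtain ⟨N, hN0, hN⟩ := exists_pow_not_dvd_ideal hspan
  set g : adjF K γ := adjElt K γ with hgdef
  set δ : adjF K γ := g⁻¹ with hδdef
  set tF : adjF K γ := algebraMap (𝓞 (adjF K γ)) (adjF K γ) (phima K γ t) with htFdef
  have htF0 : tF ≠ 0 := fun h => htS0 (NumberField.RingOfIntegers.coe_eq_zero_iff.mp h)
  set A : Ideal (𝓞 (adjF K γ)) :=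
    { carrier := {w | ∃ a : 𝓞 (adjF K γ),
        algebraMap (𝓞 (adjF K γ)) (adjF K γ) w * δ ^ N =
          tF * algebraMap (𝓞 (adjF K γ)) (adjF K γ) a}
      add_mem' := by
        rintro w₁ w₂ ⟨a₁, h₁⟩ ⟨a₂, h₂⟩
        exact ⟨a₁ + a₂, by rw [map_add, map_add, add_mul, h₁, h₂, mul_add]⟩
      zero_mem' := ⟨0, by simp⟩
      smul_mem' := by
        rintro c w ⟨a, h⟩
        refine ⟨c * a, ?_⟩
        rw [smul_eq_mul, map_mul, map_mul, mul_assoc, h]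
        ring } with hAdef
  have hAq : ∀ q : HeightOneSpectrum (𝓞 (adjF K γ)),
      q.asIdeal.comap (phima K γ) = p.asIdeal → ¬ A ≤ q.asIdeal := by
    intro q hq hle
    have hgq : 1 < q.valuation (adjF K γ) g := hp' q hq
    have hδlt : q.valuation (adjF K γ) δ < 1 := by
      rw [hδdef, map_inv₀]
      exact inv_lt_one_of_one_lt₀ hgq
    have hδ1 : q.valuation (adjF K γ) δ ≤ ((Multiplicative.ofAdd (-1 : ℤ) : Multiplicative ℤ) : ℤᵐ⁰) :=
      zm0_le_neg_one hδlt
    have hδN : q.valuation (adjF K γ) (δ ^ N) ≤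
        ((Multiplicative.ofAdd (-(N : ℤ)) : Multiplicative ℤ) : ℤᵐ⁰) := by
      rw [map_pow]
      calc (q.valuation (adjF K γ) δ) ^ N ≤
          (((Multiplicative.ofAdd (-1 : ℤ) : Multiplicative ℤ) : ℤᵐ⁰)) ^ N :=
            pow_le_pow_left' hδ1 N
        _ = ((Multiplicative.ofAdd (-(N : ℤ)) : Multiplicative ℤ) : ℤᵐ⁰) := by
            rw [← WithZero.coe_pow, ← ofAdd_nsmul]
            congr 2
            rw [nsmul_eq_mul]
            push_cast
            ring
    have htFv : ((Multiplicative.ofAdd (-(N : ℤ)) : Multiplicative ℤ) : ℤᵐ⁰) <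
        q.valuation (adjF K γ) tF := by
      rw [htFdef, valuation_of_algebraMap]
      refine lt_of_not_ge (fun hcon => hN q ?_)
      exact (q.intValuation_le_pow_iff_dvd _ N).mp hcon
    have hη : q.valuation (adjF K γ) (δ ^ N * tF⁻¹) ≤ 1 := by
      rw [Valuation.map_mul, map_inv₀]
      have h2 : (q.valuation (adjF K γ) tF)⁻¹ ≤
          (((Multiplicative.ofAdd (-(N : ℤ)) : Multiplicative ℤ) : ℤᵐ⁰))⁻¹ :=
        zm0_inv_antitone WithZero.coe_ne_zero htFv.le
      calc q.valuation (adjF K γ) (δ ^ N) * (q.valuation (adjF K γ) tF)⁻¹ ≤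
          ((Multiplicative.ofAdd (-(N : ℤ)) : Multiplicative ℤ) : ℤᵐ⁰) *
          (((Multiplicative.ofAdd (-(N : ℤ)) : Multiplicative ℤ) : ℤᵐ⁰))⁻¹ :=
            mul_le_mul' hδN h2
        _ = 1 := mul_inv_cancel₀ WithZero.coe_ne_zero
    obtain ⟨a, s, hs, heq⟩ := keyLocal q _ hη
    apply hs
    apply hle
    refine ⟨a, ?_⟩
    have heq2 : algebraMap (𝓞 (adjF K γ)) (adjF K γ) s * (δ ^ N * tF⁻¹) * tF =
        algebraMap (𝓞 (adjF K γ)) (adjF K γ) a * tF := by rw [heq]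
    calc algebraMap (𝓞 (adjF K γ)) (adjF K γ) s * δ ^ N
        = algebraMap (𝓞 (adjF K γ)) (adjF K γ) s * (δ ^ N * tF⁻¹) * tF := by
          field_simp
      _ = algebraMap (𝓞 (adjF K γ)) (adjF K γ) a * tF := heq2
      _ = tF * algebraMap (𝓞 (adjF K γ)) (adjF K γ) a := by ring
  obtain ⟨z, hzp, hzA⟩ := avoid K γ p A hAq
  obtain ⟨a₀, ha₀⟩ := hzA
  obtain ⟨d, hd0, hd⟩ := exists_denom K γ
  have hvd0 : p.intValuation d ≠ 0 := by
    exact p.intValuation_ne_zero d hd0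
  set k : ℕ := (Multiplicative.toAdd (WithZero.unzero hvd0)).natAbs + 1 with hkdef
  set dK := algebraMap (𝓞 K) K d with hdKdef
  set zK := algebraMap (𝓞 K) K z with hzKdef
  set tK := algebraMap (𝓞 K) K t with htKdef
  have htK0 : tK ≠ 0 := fun h => ht0 (NumberField.RingOfIntegers.coe_eq_zero_iff.mp h)
  set wK : K := dK * zK ^ k * (tK ^ k)⁻¹ with hwKdef
  have hzF : inclKF K γ zK = tF * algebraMap (𝓞 (adjF K γ)) (adjF K γ) a₀ * g ^ N := by
    have h2 : inclKF K γ zK = algebraMap (𝓞 (adjF K γ)) (adjF K γ) (phima K γ z) :=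
      (phima_coe K γ z).symm
    rw [h2, ← ha₀, hδdef, inv_pow, mul_assoc, inv_mul_cancel₀ (pow_ne_zero _ hg0), mul_one]
  have htKF : inclKF K γ tK = tF := (phima_coe K γ t).symm
  have hwKF : inclKF K γ wK = inclKF K γ dK *
      (algebraMap (𝓞 (adjF K γ)) (adjF K γ) a₀) ^ k * g ^ (N * k) := by
    rw [hwKdef, map_mul, map_mul, map_pow, map_inv₀, map_pow, hzF, htKF]
    have hexp : (tF * algebraMap (𝓞 (adjF K γ)) (adjF K γ) a₀ * g ^ N) ^ k =
        tF ^ k * ((algebraMap (𝓞 (adjF K γ)) (adjF K γ) a₀) ^ k * g ^ (N * k)) := by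
      rw [mul_pow, mul_pow, ← pow_mul, mul_assoc]
    rw [hexp]
    field_simp
  set x : Qbar := algebraMap K Qbar wK with hxdef
  have hxO : x ∈ OKadj K γ := by
    have h3 : x = algebraMap K Qbar dK *
        algebraMap (adjF K γ) Qbar (algebraMap (𝓞 (adjF K γ)) (adjF K γ) (a₀ ^ k)) *
        γ ^ (N * k) := by
      rw [hxdef, ← inclKF_coe K γ wK, hwKF, map_mul, map_mul, map_pow, map_pow,
        inclKF_coe, map_pow]
      rw [adjElt_coe]
      simp [map_pow]
    rw [h3]
    exact Subring.mul_mem _ (hd (a₀ ^ k)) (Subring.pow_mem _ (gamma_mem_OKadj K γ) _)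
  have hxK : x ∈ (K : Set Qbar) := SetLike.coe_mem wK
  have hxOK : x ∈ OKset K := by rw [← hset]; exact ⟨hxO, hxK⟩
  obtain ⟨w₀, hw₀⟩ := hxOK
  have hKeq : algebraMap (𝓞 K) K w₀ = wK :=
    (algebraMap K Qbar).injective
      (by rw [show algebraMap K Qbar (algebraMap (𝓞 K) K w₀) = x from hw₀, hxdef])
  have hmul : w₀ * t ^ k = d * z ^ k := by
    have hKeq2 : algebraMap (𝓞 K) K (w₀ * t ^ k) = algebraMap (𝓞 K) K (d * z ^ k) := by
      rw [map_mul, map_mul, map_pow, map_pow, hKeq, hwKdef]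
      field_simp
      ring
    exact IsFractionRing.injective (𝓞 K) K hKeq2
  have hvz : p.intValuation z = 1 := intVal_eq_one_of_not_mem p hzp
  have hvt : p.intValuation t ≤ ((Multiplicative.ofAdd (-1 : ℤ) : Multiplicative ℤ) : ℤᵐ⁰) :=
    zm0_le_neg_one (intVal_lt_one_of_mem p htp)
  have hcontr := congrArg (fun r => p.intValuation r) hmul
  simp only [map_mul, map_pow, hvz, one_pow, mul_one] at hcontr
  have hled : p.intValuation d ≤ ((Multiplicative.ofAdd (-(k : ℤ)) : Multiplicative ℤ) : ℤᵐ⁰) := by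
    rw [← hcontr]
    calc p.intValuation w₀ * p.intValuation t ^ k ≤
        1 * (((Multiplicative.ofAdd (-1 : ℤ) : Multiplicative ℤ) : ℤᵐ⁰)) ^ k :=
          mul_le_mul' (p.intValuation_le_one w₀) (pow_le_pow_left' hvt k)
      _ = ((Multiplicative.ofAdd (-(k : ℤ)) : Multiplicative ℤ) : ℤᵐ⁰) := by
          rw [one_mul, ← WithZero.coe_pow, ← ofAdd_nsmul]
          congr 2
          rw [nsmul_eq_mul]
          push_cast
          ring
  rw [← WithZero.coe_unzero hvd0, WithZero.coe_le_coe] at hled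
  have hfin : Multiplicative.toAdd (WithZero.unzero hvd0) ≤ -(k : ℤ) := hled
  rw [hkdef] at hfin
  omega

end Main

theorem stmt2 (K : IntermediateField ℚ Qbar) [FiniteDimensional ℚ K] (γ : Qbar) :
    XSet K γ = ∅ ↔ (OKadj K γ : Set Qbar) ∩ (K : Set Qbar) = OKset K :=
  ⟨dir1 K γ, dir2 K γ⟩
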